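/- For every ε > 0 there exist θ > 0 and c₁(θ) > 0 with c₁(θ) ≤ ε such that for all x ≥ 0 with |x − 1| > θ, one has |x − 1| ≤ c₁(θ)·ℓ(x); i.e., the optimal constant in the linear comparison |x−1| ≤ c·ℓ(x) on {|x−1| > θ} tends to 0 as θ → ∞. -/
import Mathlib


/-- Linear comparison away from 1 with vanishing constant: for every ε > 0 there exist
θ > 0 and 0 < c₁(θ) ≤ ε with |x−1| ≤ c₁(θ) ℓ(x) on {x ≥ 0 : |x−1| > θ}. -/
theorem ell_linear_comparison_vanishing :
    ∀ ε : ℝ, 0 < ε → ∃ θ : ℝ, 0 < θ ∧ ∃ c₁ : ℝ, 0 < c₁ ∧ c₁ ≤ ε ∧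
      ∀ x : ℝ, 0 ≤ x → θ < |x - 1| →
        |x - 1| ≤ c₁ * (x * Real.log x - x + 1) := by
  intro ε hε
  refine ⟨Real.exp (1 + 1/ε), Real.exp_pos _, ε, hε, le_refl _, ?_⟩
  intro x hx hθ
  have hexp1 : (1:ℝ) ≤ Real.exp (1 + 1/ε) :=
    Real.one_le_exp (by positivity)
  have hx1 : Real.exp (1 + 1/ε) < x - 1 := by
    rcases abs_cases (x - 1) with ⟨h1, _⟩ | ⟨h1, _⟩
    · linarith
    · linarith
  have hxe : Real.exp (1 + 1/ε) ≤ x := by linarith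
  have hlog : 1 + 1/ε ≤ Real.log x := by
    rw [← Real.log_exp (1 + 1/ε)]
    exact Real.log_le_log (Real.exp_pos _) hxe
  rw [abs_of_pos (by linarith : (0:ℝ) < x - 1)]
  have hxpos : 0 < x := by linarith
  have h2 : x * (1 + 1/ε) ≤ x * Real.log x := by nlinarith
  have hεinv : ε * (1/ε) = 1 := by field_simp
  nlinarith
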